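/- arXiv:math/0511467 — 2 statements merged into one kernel-verified Lean document; each statement's English description precedes it below -/
import Mathlib

section
/- On the U_q(sl_2)-module V_n with canonical basis v_0, ..., v_n, let ⟨·,·⟩ be the semi-linear form determined by ⟨v_k, v_l⟩ = δ_{k,l} q^{k(n-k)} [n,k], where [n,k] = [n]!/([k]![n-k]!) is the balanced Gaussian binomial. Then ⟨xu, v⟩ = ⟨u, τ(x)v⟩ holds for all x ∈ U_q(sl_2) and u, v ∈ V_n, where τ is the antilinear anti-automorphism with τ(E) = qFK^{-1}, τ(F) = qEK, τ(K) = K^{-1}. (It suffices to verify this for x ∈ {E, F, K, K^{-1}} on basis vectors.) -/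
set_option synthInstance.maxHeartbeats 1000000
set_option maxHeartbeats 1000000

noncomputable section

/-- The ground field `ℂ(q)`. -/
abbrev K : Type := RatFunc ℂ

/-- The indeterminate `q ∈ ℂ(q)`. -/
def q : K := RatFunc.X

/-- The quantum integer `[a] = (qᵃ - q⁻ᵃ)/(q - q⁻¹)`. -/
def qint (a : ℤ) : K := (q ^ a - q ^ (-a)) / (q - q⁻¹)

/-- The quantum factorial `[a]! = [a][a-1]⋯[1]`. -/
def qfact : ℕ → K
  | 0 => 1
  | a + 1 => qint (a + 1) * qfact a

/-- The balanced Gaussian binomial coefficient `[n,k] = [n]!/([k]![n-k]!)`. -/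
def qbinom (n k : ℕ) : K := qfact n / (qfact k * qfact (n - k))

/-- The matrix of `E` on `V_n` in the canonical basis: `E v_k = [k+1] v_{k+1}`. -/
def Emat (n : ℕ) : Matrix (Fin (n + 1)) (Fin (n + 1)) K :=
  Matrix.of fun i j => if (i : ℕ) = (j : ℕ) + 1 then qint ((j : ℕ) + 1) else 0

/-- The matrix of `F` on `V_n` in the canonical basis: `F v_k = [n-k+1] v_{k-1}`. -/
def Fmat (n : ℕ) : Matrix (Fin (n + 1)) (Fin (n + 1)) K :=
  Matrix.of fun i j => if (i : ℕ) + 1 = (j : ℕ) then qint ((n : ℤ) - (j : ℕ) + 1) else 0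

/-- The matrix of `K` on `V_n`: `K v_k = q^{2k-n} v_k`. -/
def Kmat (n : ℕ) : Matrix (Fin (n + 1)) (Fin (n + 1)) K :=
  Matrix.diagonal fun k => q ^ (2 * (k : ℤ) - (n : ℤ))

/-- The matrix of `K⁻¹` on `V_n`: `K⁻¹ v_k = q^{n-2k} v_k`. -/
def Kinvmat (n : ℕ) : Matrix (Fin (n + 1)) (Fin (n + 1)) K :=
  Matrix.diagonal fun k => q ^ ((n : ℤ) - 2 * (k : ℤ))

/-- The semi-linear form on `V_n` with `⟨v_k, v_l⟩ = δ_{k,l} q^{k(n-k)} [n,k]`,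
antilinear in the first variable (via the bar involution `q ↦ q⁻¹`). -/
def sform (n : ℕ) (bar : K ≃+* K) (u v : Fin (n + 1) → K) : K :=
  ∑ k : Fin (n + 1),
    bar (u k) * (q ^ ((k : ℕ) * (n - (k : ℕ))) * qbinom n (k : ℕ) * v k)

/-!
The form is diagonal with weights `w_k = q^{k(n-k)} [n,k]`, so `⟨Au, v⟩ = ⟨u, Bv⟩` reduces to
the entrywise identity `bar(A_{kj}) w_k = w_j B_{jk}`. Since `bar` fixes every quantum integer
and inverts `q`, this is immediate for the diagonal `K^{±1}`. For `E` and `F` only the entries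
with `k = j + 1` (resp. `j = k + 1`) survive, and there it is the weight recursion
`q^{2j+1} [j+1] w_{j+1} = q^n [n-j] w_j`, which combines `[j+1] [n,j+1] = [n-j] [n,j]` with
`(j+1)(n-j-1) + 2j + 1 = j(n-j) + n`.
-/

lemma q_ne_zero : q ≠ 0 := RatFunc.X_ne_zero

lemma q_pow_ne_one {m : ℕ} (hm : m ≠ 0) : q ^ m ≠ 1 := by
  intro h
  have hX : (Polynomial.X : Polynomial ℂ) ^ m = 1 := by
    apply RatFunc.algebraMap_injective ℂ
    rw [map_pow, RatFunc.algebraMap_X, map_one]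
    exact h
  simpa [hm] using congrArg Polynomial.natDegree hX

lemma q_zpow_sub_zpow_neg_ne_zero {m : ℕ} (hm : m ≠ 0) :
    q ^ (m : ℤ) - q ^ (-(m : ℤ)) ≠ 0 := by
  intro h
  have hsq : q ^ (m + m) = 1 := by
    rw [pow_add, ← zpow_natCast]
    nth_rewrite 2 [sub_eq_zero.1 h]
    rw [zpow_neg, mul_inv_cancel₀ (zpow_ne_zero _ q_ne_zero)]
  exact q_pow_ne_one (by omega) hsq

lemma qint_natCast_ne_zero {m : ℕ} (hm : m ≠ 0) : qint m ≠ 0 := by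
  refine div_ne_zero (q_zpow_sub_zpow_neg_ne_zero hm) ?_
  simpa using q_zpow_sub_zpow_neg_ne_zero one_ne_zero

lemma qfact_ne_zero : ∀ m, qfact m ≠ 0
  | 0 => one_ne_zero
  | m + 1 => mul_ne_zero (mod_cast qint_natCast_ne_zero m.succ_ne_zero) (qfact_ne_zero m)

lemma qint_succ_mul_qbinom_succ {n j : ℕ} (h : j < n) :
    qint (j + 1) * qbinom n (j + 1) = qint ((n : ℤ) - j) * qbinom n j := by
  obtain ⟨m, rfl⟩ : ∃ m, n = j + 1 + m := ⟨n - (j + 1), by omega⟩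
  have hj : qint (j + 1) ≠ 0 := mod_cast qint_natCast_ne_zero j.succ_ne_zero
  have hm : qint (m + 1) ≠ 0 := mod_cast qint_natCast_ne_zero m.succ_ne_zero
  rw [show ((j + 1 + m : ℕ) : ℤ) - j = ((m : ℕ) : ℤ) + 1 by push_cast; ring]
  simp only [qbinom, show j + 1 + m - (j + 1) = m by omega, show j + 1 + m - j = m + 1 by omega,
    qfact]
  have hfj := qfact_ne_zero j
  have hfm := qfact_ne_zero m
  field_simp

open Matrix

def sformWeight (n k : ℕ) : K := q ^ (k * (n - k)) * qbinom n k

lemma sform_eq_sum_sformWeight (n : ℕ) (bar : K ≃+* K) (u v : Fin (n + 1) → K) :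
    sform n bar u v = ∑ k : Fin (n + 1), bar (u k) * (sformWeight n k * v k) :=
  rfl

lemma sform_mulVec_eq_of_entries {n : ℕ} {bar : K ≃+* K}
    {A B : Matrix (Fin (n + 1)) (Fin (n + 1)) K}
    (h : ∀ j k, bar (A k j) * sformWeight n k = sformWeight n j * B j k) (u v : Fin (n + 1) → K) :
    sform n bar (A *ᵥ u) v = sform n bar u (B *ᵥ v) := by
  simp only [sform_eq_sum_sformWeight, mulVec, dotProduct, map_sum, map_mul, Finset.sum_mul,
    Finset.mul_sum]
  rw [Finset.sum_comm]
  refine Finset.sum_congr rfl fun j _ => Finset.sum_congr rfl fun k _ => ?_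
  linear_combination (bar (u j) * v k) * h j k

lemma sform_diagonal_mulVec_eq {n : ℕ} {bar : K ≃+* K} {d d' : Fin (n + 1) → K}
    (h : ∀ k, bar (d k) = d' k) (u v : Fin (n + 1) → K) :
    sform n bar (diagonal d *ᵥ u) v = sform n bar u (diagonal d' *ᵥ v) := by
  simp only [sform_eq_sum_sformWeight, mulVec_diagonal, map_mul, h]
  exact Finset.sum_congr rfl fun k _ => by ring

lemma q_pow_mul_zpow_sub (a b : ℕ) : q ^ a * q ^ ((b : ℤ) - a) = q ^ b := by
  rw [← zpow_natCast, ← zpow_add₀ q_ne_zero, add_sub_cancel, zpow_natCast]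

lemma q_pow_mul_qint_succ_mul_sformWeight_succ {n j : ℕ} (h : j < n) :
    q ^ (2 * j + 1) * (qint (j + 1) * sformWeight n (j + 1))
      = q ^ n * (qint ((n : ℤ) - j) * sformWeight n j) := by
  have hexp : 2 * j + 1 + (j + 1) * (n - (j + 1)) = n + j * (n - j) := by
    obtain ⟨m, rfl⟩ : ∃ m, n = j + 1 + m := ⟨n - (j + 1), by omega⟩
    rw [show j + 1 + m - (j + 1) = m by omega, show j + 1 + m - j = m + 1 by omega]
    ring
  calc q ^ (2 * j + 1) * (qint (j + 1) * sformWeight n (j + 1))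
      = q ^ (2 * j + 1 + (j + 1) * (n - (j + 1))) * (qint (j + 1) * qbinom n (j + 1)) := by
        rw [sformWeight]; ring
    _ = q ^ n * (qint ((n : ℤ) - j) * sformWeight n j) := by
        rw [hexp, qint_succ_mul_qbinom_succ h, sformWeight]; ring

section bar

variable {bar : K ≃+* K} (hbar : bar q = q⁻¹)
include hbar

lemma bar_q_zpow (m : ℤ) : bar (q ^ m) = q ^ (-m) := by
  rw [map_zpow₀, hbar, _root_.inv_zpow']

lemma bar_qint (a : ℤ) : bar (qint a) = qint a := by
  have hden : q - q⁻¹ = q ^ (1 : ℤ) - q ^ (-1 : ℤ) := by simp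
  rw [qint, hden, map_div₀, map_sub, map_sub, bar_q_zpow hbar, bar_q_zpow hbar, bar_q_zpow hbar,
    bar_q_zpow hbar, neg_neg, neg_neg, ← neg_sub (q ^ a), ← neg_sub (q ^ (1 : ℤ))]
  exact neg_div_neg_eq _ _

lemma bar_Emat_mul_sformWeight {n : ℕ} (j k : Fin (n + 1)) :
    bar (Emat n k j) * sformWeight n k = sformWeight n j * (q • (Fmat n * Kinvmat n)) j k := by
  simp only [Emat, Fmat, Kinvmat, of_apply, Matrix.smul_apply, mul_diagonal, smul_eq_mul]
  by_cases hkj : (k : ℕ) = j + 1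
  · rw [if_pos hkj, if_pos hkj.symm, bar_qint hbar, hkj]
    have hrec := q_pow_mul_qint_succ_mul_sformWeight_succ (n := n) (j := j) (by omega)
    have hpow := q_pow_mul_zpow_sub (2 * (j + 1)) n
    push_cast at hrec hpow ⊢
    rw [show (n : ℤ) - (j + 1) + 1 = n - j by ring]
    refine mul_left_cancel₀ (pow_ne_zero (2 * j + 1) q_ne_zero) ?_
    linear_combination hrec - qint ((n : ℤ) - j) * sformWeight n j * hpow
  · rw [if_neg hkj, if_neg (Ne.symm hkj)]
    simp

lemma bar_Fmat_mul_sformWeight {n : ℕ} (j k : Fin (n + 1)) :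
    bar (Fmat n k j) * sformWeight n k = sformWeight n j * (q • (Emat n * Kmat n)) j k := by
  simp only [Emat, Fmat, Kmat, of_apply, Matrix.smul_apply, mul_diagonal, smul_eq_mul]
  by_cases hjk : (j : ℕ) = k + 1
  · rw [if_pos hjk.symm, if_pos hjk, bar_qint hbar, hjk]
    have hrec := q_pow_mul_qint_succ_mul_sformWeight_succ (n := n) (j := k) (by omega)
    have hpow := q_pow_mul_zpow_sub n (2 * k)
    push_cast at hpow ⊢
    rw [show (n : ℤ) - (k + 1) + 1 = n - k by ring]
    refine mul_left_cancel₀ (pow_ne_zero n q_ne_zero) ?_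
    linear_combination -hrec - q * (qint (k + 1) * sformWeight n (k + 1)) * hpow
  · rw [if_neg (Ne.symm hjk), if_neg hjk]
    simp

end bar

theorem sform_tau_adjoint_general (n : ℕ) (bar : K ≃+* K) (hbarq : bar q = q⁻¹) :
    ∀ u v : Fin (n + 1) → K,
      sform n bar ((Emat n).mulVec u) v
        = sform n bar u ((q • (Fmat n * Kinvmat n)).mulVec v) ∧
      sform n bar ((Fmat n).mulVec u) v
        = sform n bar u ((q • (Emat n * Kmat n)).mulVec v) ∧
      sform n bar ((Kmat n).mulVec u) v = sform n bar u ((Kinvmat n).mulVec v) ∧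
      sform n bar ((Kinvmat n).mulVec u) v = sform n bar u ((Kmat n).mulVec v) := by
  have hKmat (k : Fin (n + 1)) : bar (q ^ (2 * (k : ℤ) - n)) = q ^ ((n : ℤ) - 2 * k) := by
    rw [bar_q_zpow hbarq, neg_sub]
  have hKinvmat (k : Fin (n + 1)) : bar (q ^ ((n : ℤ) - 2 * k)) = q ^ (2 * (k : ℤ) - n) := by
    rw [bar_q_zpow hbarq, neg_sub]
  exact fun u v =>
    ⟨sform_mulVec_eq_of_entries (bar_Emat_mul_sformWeight hbarq) u v,
      sform_mulVec_eq_of_entries (bar_Fmat_mul_sformWeight hbarq) u v,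
      sform_diagonal_mulVec_eq hKmat u v, sform_diagonal_mulVec_eq hKinvmat u v⟩

/-- On `V_n`, the semi-linear form with `⟨v_k, v_l⟩ = δ_{k,l} q^{k(n-k)} [n,k]` satisfies
`⟨xu, v⟩ = ⟨u, τ(x)v⟩` for the generators `x ∈ {E, F, K, K⁻¹}` of `U_q(sl₂)`, where
`τ(E) = qFK⁻¹`, `τ(F) = qEK`, `τ(K) = K⁻¹`, `τ(K⁻¹) = K`. -/
theorem sform_tau_adjoint (n : ℕ) (bar : K ≃+* K) (hbarq : bar q = q⁻¹)
    (hbarC : ∀ c : ℂ, bar (algebraMap ℂ K c) = algebraMap ℂ K c) :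
    ∀ u v : Fin (n + 1) → K,
      sform n bar ((Emat n).mulVec u) v
        = sform n bar u ((q • (Fmat n * Kinvmat n)).mulVec v) ∧
      sform n bar ((Fmat n).mulVec u) v
        = sform n bar u ((q • (Emat n * Kmat n)).mulVec v) ∧
      sform n bar ((Kmat n).mulVec u) v = sform n bar u ((Kinvmat n).mulVec v) ∧
      sform n bar ((Kinvmat n).mulVec u) v = sform n bar u ((Kmat n).mulVec v) :=
  sform_tau_adjoint_general n bar hbarq
end
end

section
/- Equip V_1^{⊗n} with the U_q(sl_2)-module structure via the comultiplication ∆(E) = 1⊗E + E⊗K^{-1}, ∆(F) = K⊗F + F⊗1, ∆(K^{±1}) = K^{±1}⊗K^{±1} (iterated). Then the map i_n : V_n → V_1^{⊗n} defined by i_n(v_k) = Σ_{a ∈ {0,1}^n, |a|=k} q^{inv(a)} v_{a_1} ⊗ ··· ⊗ v_{a_n}, where |a| = Σ a_j and inv(a) = #{i<j : a_i > a_j}, is a homomorphism of U_q(sl_2)-modules: i_n(E v_k) = ∆(E) i_n(v_k), i_n(F v_k) = ∆(F) i_n(v_k), i_n(K v_k) = ∆(K) i_n(v_k). -/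
set_option synthInstance.maxHeartbeats 1000000
set_option maxHeartbeats 1000000

noncomputable section

/-- The number of inversions `#{i<j : a_i > a_j}` of a `{0,1}`-sequence. -/
def invf (n : ℕ) (a : Fin n → Fin 2) : ℕ :=
  (Finset.univ.filter fun p : Fin n × Fin n => p.1 < p.2 ∧ a p.2 < a p.1).card

/-- The number of ones `|a|` of a `{0,1}`-sequence, as an element of `Fin (n+1)`. -/
def wtFin (n : ℕ) (a : Fin n → Fin 2) : Fin (n + 1) :=
  ⟨∑ i, (a i : ℕ), by
    have h : (∑ i, (a i : ℕ)) ≤ ∑ _i : Fin n, 1 :=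
      Finset.sum_le_sum fun i _ => Nat.lt_succ_iff.mp (a i).is_lt
    simp only [Finset.sum_const, Finset.card_univ, Fintype.card_fin, smul_eq_mul,
      mul_one] at h
    omega⟩

/-- The action of `∆(E) = Σ_j 1 ⊗ ⋯ ⊗ E_j ⊗ K⁻¹ ⊗ ⋯ ⊗ K⁻¹` on `V_1^{⊗n}`, written on
coordinates with respect to the standard basis `v_a`, `a ∈ {0,1}ⁿ`. -/
def Ebig (n : ℕ) (f : (Fin n → Fin 2) → K) : (Fin n → Fin 2) → K := fun b =>
  ∑ j : Fin n,
    if b j = 1 then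
      q ^ (∑ i ∈ Finset.univ.filter (fun i => j < i), (1 - 2 * ((b i : ℕ) : ℤ)))
        * f (Function.update b j 0)
    else 0

/-- The action of `∆(F) = Σ_j K ⊗ ⋯ ⊗ K ⊗ F_j ⊗ 1 ⊗ ⋯ ⊗ 1` on `V_1^{⊗n}`. -/
def Fbig (n : ℕ) (f : (Fin n → Fin 2) → K) : (Fin n → Fin 2) → K := fun b =>
  ∑ j : Fin n,
    if b j = 0 then
      q ^ (∑ i ∈ Finset.univ.filter (fun i => i < j), (2 * ((b i : ℕ) : ℤ) - 1))
        * f (Function.update b j 1)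
    else 0

/-- The action of `∆(K) = K ⊗ ⋯ ⊗ K` on `V_1^{⊗n}`. -/
def Kbig (n : ℕ) (f : (Fin n → Fin 2) → K) : (Fin n → Fin 2) → K := fun b =>
  q ^ (∑ i : Fin n, (2 * ((b i : ℕ) : ℤ) - 1)) * f b

/-- The inclusion `i_n : V_n → V_1^{⊗n}`, `v_k ↦ Σ_{|a|=k} q^{inv(a)} v_a`, written on
coordinate vectors. -/
def Imap (n : ℕ) (g : Fin (n + 1) → K) : (Fin n → Fin 2) → K := fun a =>
  q ^ invf n a * g (wtFin n a)

lemma q_sq_ne_one : q * q ≠ 1 := by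
  intro h
  have h1 : (algebraMap (Polynomial ℂ) K) (Polynomial.X * Polynomial.X) =
      algebraMap (Polynomial ℂ) K 1 := by
    simpa [q, RatFunc.algebraMap_X, map_mul] using h
  have h2 := RatFunc.algebraMap_injective ℂ h1
  have := congrArg (Polynomial.eval 0) h2
  simp at this

lemma q_sub_inv_ne_zero : q - q⁻¹ ≠ 0 := by
  intro h
  apply q_sq_ne_one
  have hq : q = q⁻¹ := sub_eq_zero.mp h
  calc q * q = q * q⁻¹ := by rw [← hq]
  _ = 1 := mul_inv_cancel₀ q_ne_zero

lemma zpadd (a b : ℤ) : q ^ (a + b) = q ^ a * q ^ b := zpow_add₀ q_ne_zero a b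

lemma zp_succ (e : ℤ) : q ^ (e + 1) = q ^ e * q := by rw [zpadd, zpow_one]

lemma step_tel (e : ℤ) : (q - q⁻¹) * (q ^ e * q) = q ^ e * q * q - q ^ e := by
  have hq : q⁻¹ * q = 1 := inv_mul_cancel₀ q_ne_zero
  generalize q ^ e = a
  calc (q - q⁻¹) * (a * q) = a * q * q - a * (q⁻¹ * q) := by ring
  _ = a * q * q - a := by rw [hq, mul_one]

lemma qint_sum (m : ℕ) : qint m = ∑ r ∈ Finset.range m, q ^ (2 * (r : ℤ) - m + 1) := by
  have key : (q - q⁻¹) * ∑ r ∈ Finset.range m, q ^ (2 * (r : ℤ) - m + 1)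
      = q ^ (m : ℤ) - q ^ (-(m : ℤ)) := by
    rw [Finset.mul_sum]
    have hterm : ∀ r ∈ Finset.range m, (q - q⁻¹) * q ^ (2 * (r : ℤ) - m + 1)
        = (fun r : ℕ => q ^ (2 * (r : ℤ) - m)) (r + 1)
          - (fun r : ℕ => q ^ (2 * (r : ℤ) - m)) r := by
      intro r _
      simp only
      have e1 : q ^ (2 * ((r + 1 : ℕ) : ℤ) - m) = q ^ (2 * (r : ℤ) - m) * q * q := by
        rw [show 2 * ((r + 1 : ℕ) : ℤ) - m = (2 * (r : ℤ) - m + 1) + 1 by push_cast; ring,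
          zp_succ, zp_succ]
      rw [e1, zp_succ]
      exact step_tel _
    rw [Finset.sum_congr rfl hterm, Finset.sum_range_sub (fun r : ℕ => q ^ (2 * (r : ℤ) - m)) m]
    congr 1 <;> congr 1 <;> push_cast <;> ring
  rw [qint, ← key, mul_div_cancel_left₀ _ q_sub_inv_ne_zero]

lemma qint_sum' (m : ℕ) : qint m = ∑ s ∈ Finset.range m, q ^ ((m : ℤ) - 1 - 2 * s) := by
  have key : (q - q⁻¹) * ∑ s ∈ Finset.range m, q ^ ((m : ℤ) - 1 - 2 * s)
      = q ^ (m : ℤ) - q ^ (-(m : ℤ)) := by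
    rw [Finset.mul_sum]
    have hterm : ∀ s ∈ Finset.range m, (q - q⁻¹) * q ^ ((m : ℤ) - 1 - 2 * s)
        = (fun s : ℕ => q ^ ((m : ℤ) - 2 * s)) s
          - (fun s : ℕ => q ^ ((m : ℤ) - 2 * s)) (s + 1) := by
      intro s _
      simp only
      have e1 : q ^ ((m : ℤ) - 2 * s) = q ^ ((m : ℤ) - 2 - 2 * s) * q * q := by
        rw [show (m : ℤ) - 2 * s = ((m : ℤ) - 2 - 2 * s + 1) + 1 by ring, zp_succ, zp_succ]
      have e2 : q ^ ((m : ℤ) - 1 - 2 * s) = q ^ ((m : ℤ) - 2 - 2 * s) * q := by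
        rw [show (m : ℤ) - 1 - 2 * s = ((m : ℤ) - 2 - 2 * s) + 1 by ring, zp_succ]
      have e3 : q ^ ((m : ℤ) - 2 * ((s + 1 : ℕ) : ℤ)) = q ^ ((m : ℤ) - 2 - 2 * s) := by
        congr 1; push_cast; ring
      rw [e1, e2, e3]
      exact step_tel _
    rw [Finset.sum_congr rfl hterm,
      Finset.sum_range_sub' (fun s : ℕ => q ^ ((m : ℤ) - 2 * s)) m]
    congr 1 <;> congr 1 <;> push_cast <;> ring
  rw [qint, ← key, mul_div_cancel_left₀ _ q_sub_inv_ne_zero]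

/-- Summing a function of the rank over a finset equals summing over an initial range. -/
lemma sum_rank {n : ℕ} (S : Finset (Fin n)) (f : ℕ → K) :
    ∑ j ∈ S, f ((S.filter (fun i => i < j)).card) = ∑ r ∈ Finset.range S.card, f r := by
  have hmono : ∀ j1 ∈ S, ∀ j2 ∈ S, j1 < j2 →
      (S.filter (fun i => i < j1)).card < (S.filter (fun i => i < j2)).card := by
    intro j1 h1 j2 h2 h12
    apply Finset.card_lt_card
    constructor
    · intro i hi
      rw [Finset.mem_filter] at hi ⊢
      exact ⟨hi.1, lt_trans hi.2 h12⟩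
    · intro hsub
      have := hsub (Finset.mem_filter.mpr ⟨h1, h12⟩)
      exact absurd (Finset.mem_filter.mp this).2 (lt_irrefl j1)
  have hinj : ∀ j1 ∈ S, ∀ j2 ∈ S,
      (S.filter (fun i => i < j1)).card = (S.filter (fun i => i < j2)).card → j1 = j2 := by
    intro j1 h1 j2 h2 h
    rcases lt_trichotomy j1 j2 with h' | h' | h'
    · exact absurd h (Nat.ne_of_lt (hmono _ h1 _ h2 h'))
    · exact h'
    · exact absurd h.symm (Nat.ne_of_lt (hmono _ h2 _ h1 h'))
  rw [← Finset.sum_image hinj]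
  congr 1
  apply Finset.eq_of_subset_of_card_le
  · intro r hr
    simp only [Finset.mem_image] at hr
    obtain ⟨j, hj, rfl⟩ := hr
    rw [Finset.mem_range]
    apply Finset.card_lt_card
    constructor
    · intro i hi
      exact (Finset.mem_filter.mp hi).1
    · intro hsub
      have := hsub hj
      exact absurd (Finset.mem_filter.mp this).2 (lt_irrefl j)
  · rw [Finset.card_image_of_injOn hinj, Finset.card_range]

/-- Partition of a finset by position relative to an element. -/
lemma card_split {n : ℕ} (S : Finset (Fin n)) (j : Fin n) (hj : j ∈ S) :
    (S.filter (fun i => i < j)).card + (S.filter (fun i => j < i)).card + 1 = S.card := by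
  have h1 : (S.filter (fun i => i < j)).card + (S.filter (fun i => ¬ i < j)).card = S.card :=
    Finset.card_filter_add_card_filter_not _
  have h2 : S.filter (fun i => ¬ i < j) = insert j (S.filter (fun i => j < i)) := by
    ext i
    simp only [Finset.mem_filter, Finset.mem_insert, not_lt]
    constructor
    · rintro ⟨hiS, hle⟩
      rcases eq_or_lt_of_le hle with h | h
      · exact Or.inl h.symm
      · exact Or.inr ⟨hiS, h⟩
    · rintro (rfl | ⟨hiS, h⟩)
      · exact ⟨hj, le_refl _⟩
      · exact ⟨hiS, le_of_lt h⟩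
  have h3 : j ∉ S.filter (fun i => j < i) := by
    simp only [Finset.mem_filter]
    rintro ⟨-, h⟩
    exact lt_irrefl j h
  rw [h2, Finset.card_insert_of_notMem h3] at h1
  omega

lemma fin2_cases' (x : Fin 2) : x = 0 ∨ x = 1 := by omega

/-- Number of ones equals the weight. -/
lemma card_ones {n : ℕ} (b : Fin n → Fin 2) :
    (Finset.univ.filter (fun i => b i = 1)).card = ∑ i, ((b i : ℕ)) := by
  rw [Finset.card_filter]
  apply Finset.sum_congr rfl
  intro i _
  rcases fin2_cases' (b i) with h | h <;> simp [h]

/-- Number of zeros. -/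
lemma card_zeros {n : ℕ} (b : Fin n → Fin 2) :
    (Finset.univ.filter (fun i => b i = 0)).card = n - ∑ i, ((b i : ℕ)) := by
  have h1 : (Finset.univ.filter (fun i => b i = 0)).card
      + (Finset.univ.filter (fun i => ¬ b i = 0)).card = n := by
    rw [Finset.card_filter_add_card_filter_not, Finset.card_univ, Fintype.card_fin]
  have h2 : Finset.univ.filter (fun i => ¬ b i = 0) = Finset.univ.filter (fun i => b i = 1) := by
    apply Finset.filter_congr
    intro i _
    rcases fin2_cases' (b i) with h | h <;> simp [h]
  rw [h2, card_ones] at h1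
  omega

/-- Weight of an update. -/
lemma wt_update {n : ℕ} (b : Fin n → Fin 2) (j : Fin n) (v : Fin 2) :
    (∑ i, ((Function.update b j v i : ℕ))) + (b j : ℕ) = (∑ i, (b i : ℕ)) + (v : ℕ) := by
  have h : (fun i => ((Function.update b j v i : ℕ))) =
      Function.update (fun i => (b i : ℕ)) j (v : ℕ) := by
    funext i
    rcases eq_or_ne i j with rfl | h
    · simp
    · simp [Function.update_of_ne h]
  calc (∑ i, ((Function.update b j v i : ℕ))) + (b j : ℕ)
      = (∑ i, Function.update (fun i => (b i : ℕ)) j (v : ℕ) i) + (b j : ℕ) := by rw [h]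
    _ = ((v : ℕ) + ∑ i ∈ Finset.univ \ {j}, (b i : ℕ)) + (b j : ℕ) := by
        rw [Finset.sum_update_of_mem (Finset.mem_univ j)]
    _ = (∑ i, (b i : ℕ)) + (v : ℕ) := by
        have he : (b j : ℕ) + ∑ i ∈ Finset.univ \ {j}, (b i : ℕ) = ∑ i, (b i : ℕ) := by
          have h' := Finset.add_sum_erase Finset.univ (fun i => (b i : ℕ)) (Finset.mem_univ j)
          rwa [Finset.erase_eq] at h'
        omega

/-- Auxiliary: a "single-index" card written as a pair sum. -/
lemma card_as_pair_sum_left {n : ℕ} (j : Fin n) (P : Fin n → Prop) [DecidablePred P] :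
    (Finset.univ.filter (fun i => P i)).card
      = (∑ p : Fin n × Fin n, if p.1 = j ∧ P p.2 then 1 else 0) := by
  symm
  rw [Fintype.sum_prod_type, Finset.card_filter]
  rw [Finset.sum_comm]
  apply Finset.sum_congr rfl
  intro y _
  have : ∀ x : Fin n, (if x = j ∧ P y then (1 : ℕ) else 0)
      = (if x = j then 1 else 0) * (if P y then 1 else 0) := by
    intro x
    by_cases h1 : x = j <;> by_cases h2 : P y <;> simp [h1, h2]
  rw [Finset.sum_congr rfl (fun x _ => this x), ← Finset.sum_mul,
    Finset.sum_ite_eq' Finset.univ j (fun _ => (1 : ℕ))]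
  simp

lemma card_as_pair_sum_right {n : ℕ} (j : Fin n) (P : Fin n → Prop) [DecidablePred P] :
    (Finset.univ.filter (fun i => P i)).card
      = (∑ p : Fin n × Fin n, if p.2 = j ∧ P p.1 then 1 else 0) := by
  symm
  rw [Fintype.sum_prod_type, Finset.card_filter]
  apply Finset.sum_congr rfl
  intro x _
  have : ∀ y : Fin n, (if y = j ∧ P x then (1 : ℕ) else 0)
      = (if y = j then 1 else 0) * (if P x then 1 else 0) := by
    intro y
    by_cases h1 : y = j <;> by_cases h2 : P x <;> simp [h1, h2]
  rw [Finset.sum_congr rfl (fun y _ => this y), ← Finset.sum_mul,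
    Finset.sum_ite_eq' Finset.univ j (fun _ => (1 : ℕ))]
  simp

/-- Change of the inversion number when a `1` is flipped to a `0`. -/
lemma inv_update_zero {n : ℕ} (b : Fin n → Fin 2) (j : Fin n) (hbj : b j = 1) :
    invf n (Function.update b j 0) + (Finset.univ.filter (fun i => j < i ∧ b i = 0)).card
      = invf n b + (Finset.univ.filter (fun i => i < j ∧ b i = 1)).card := by
  classical
  set b' := Function.update b j 0 with hb'
  rw [invf, invf,
    card_as_pair_sum_left j (fun i => j < i ∧ b i = 0),
    card_as_pair_sum_right j (fun i => i < j ∧ b i = 1),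
    Finset.card_filter, Finset.card_filter,
    ← Finset.sum_add_distrib, ← Finset.sum_add_distrib]
  apply Finset.sum_congr rfl
  rintro ⟨x, y⟩ -
  simp only
  by_cases hx : x = j <;> by_cases hy : y = j
  · subst hx; subst hy
    simp [lt_irrefl]
  · subst hx
    have hb'y : b' y = b y := Function.update_of_ne hy _ _
    have hb'x : b' x = 0 := Function.update_self _ _ _
    rw [hb'y, hb'x, hbj]
    rcases fin2_cases' (b y) with h | h <;>
      · rw [h]
        by_cases hlt : x < y <;> simp [hlt, hy, Fin.lt_def]
  · subst hy
    have hb'x : b' x = b x := Function.update_of_ne hx _ _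
    have hb'y : b' y = 0 := Function.update_self _ _ _
    rw [hb'x, hb'y, hbj]
    rcases fin2_cases' (b x) with h | h <;>
      · rw [h]
        by_cases hlt : x < y <;> simp [hlt, hx, Fin.lt_def]
  · have hb'x : b' x = b x := Function.update_of_ne hx _ _
    have hb'y : b' y = b y := Function.update_of_ne hy _ _
    rw [hb'x, hb'y]
    simp [hx, hy]

/-- Change of the inversion number when a `0` is flipped to a `1`. -/
lemma inv_update_one {n : ℕ} (b : Fin n → Fin 2) (j : Fin n) (hbj : b j = 0) :
    invf n (Function.update b j 1) + (Finset.univ.filter (fun i => i < j ∧ b i = 1)).card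
      = invf n b + (Finset.univ.filter (fun i => j < i ∧ b i = 0)).card := by
  have h := inv_update_zero (Function.update b j 1) j (Function.update_self _ _ _)
  have e1 : Function.update (Function.update b j 1) j 0 = b := by
    rw [Function.update_idem]
    funext i
    rcases eq_or_ne i j with rfl | hne
    · rw [Function.update_self, hbj]
    · rw [Function.update_of_ne hne]
  have e2 : Finset.univ.filter (fun i => j < i ∧ Function.update b j 1 i = 0)
      = Finset.univ.filter (fun i => j < i ∧ b i = 0) := by
    apply Finset.filter_congr
    intro i _
    have : j < i → Function.update b j 1 i = b i := by
      intro hlt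
      exact Function.update_of_ne (ne_of_gt hlt) _ _
    constructor
    · rintro ⟨h1, h2⟩; exact ⟨h1, by rwa [this h1] at h2⟩
    · rintro ⟨h1, h2⟩; exact ⟨h1, by rwa [this h1]⟩
  have e3 : Finset.univ.filter (fun i => i < j ∧ Function.update b j 1 i = 1)
      = Finset.univ.filter (fun i => i < j ∧ b i = 1) := by
    apply Finset.filter_congr
    intro i _
    have : i < j → Function.update b j 1 i = b i := by
      intro hlt
      exact Function.update_of_ne (ne_of_lt hlt) _ _
    constructor
    · rintro ⟨h1, h2⟩; exact ⟨h1, by rwa [this h1] at h2⟩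
    · rintro ⟨h1, h2⟩; exact ⟨h1, by rwa [this h1]⟩
  rw [e1, e2, e3] at h
  omega


lemma Kpart (n : ℕ) (g : Fin (n + 1) → K) (b : Fin n → Fin 2) :
    Imap n ((Kmat n).mulVec g) b = Kbig n (Imap n g) b := by
  simp only [Imap, Kbig, Kmat, Matrix.mulVec_diagonal]
  have hsum : (∑ i : Fin n, (2 * ((b i : ℕ) : ℤ) - 1))
      = 2 * ((wtFin n b : ℕ) : ℤ) - n := by
    rw [Finset.sum_sub_distrib, ← Finset.mul_sum]
    simp only [Finset.sum_const, Finset.card_univ, Fintype.card_fin, nsmul_eq_mul,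
      smul_eq_mul, mul_one]
    have h1 : ((wtFin n b : ℕ) : ℤ) = ∑ i, ((b i : ℕ) : ℤ) := by
      have h0 : (wtFin n b : ℕ) = ∑ i, (b i : ℕ) := rfl
      rw [h0]
      push_cast
      rfl
    rw [h1]
  rw [hsum]
  ring

lemma Epart (n : ℕ) (g : Fin (n + 1) → K) (b : Fin n → Fin 2) :
    Imap n ((Emat n).mulVec g) b = Ebig n (Imap n g) b := by
  classical
  simp only [Imap, Ebig, Matrix.mulVec, dotProduct, Emat, Matrix.of_apply]
  set k : ℕ := ((wtFin n b : ℕ)) with hk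
  have hsum : (∑ i, ((b i : ℕ))) = k := hk.symm
  have hkn : k < n + 1 := by rw [hk]; exact (wtFin n b).isLt
  rcases Nat.eq_zero_or_pos k with hk0 | hkpos
  · -- weight zero: both sides vanish
    have hb0 : ∀ j, ¬ b j = 1 := by
      intro j h
      have h1 := Finset.sum_eq_zero_iff.mp (hsum.trans hk0) j (Finset.mem_univ j)
      rw [h] at h1
      simp at h1
    have hL : (∑ x : Fin (n + 1),
        (if k = (x : ℕ) + 1 then qint ((x : ℕ) + 1) else 0) * g x) = 0 := by
      apply Finset.sum_eq_zero
      intro x _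
      rw [if_neg (by omega), zero_mul]
    have hR : (∑ j : Fin n, if b j = 1 then
        q ^ (∑ i ∈ Finset.univ.filter (fun i => j < i), (1 - 2 * ((b i : ℕ) : ℤ)))
          * (q ^ invf n (Function.update b j 0) * g (wtFin n (Function.update b j 0)))
        else 0) = 0 := by
      apply Finset.sum_eq_zero
      intro j _
      rw [if_neg (hb0 j)]
    rw [hL, hR, mul_zero]
  · -- weight positive
    have hx0lt : k - 1 < n + 1 := by omega
    -- left-hand side
    have hL : (∑ x : Fin (n + 1),
        (if k = (x : ℕ) + 1 then qint ((x : ℕ) + 1) else 0) * g x)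
        = qint ((k - 1 : ℕ) + 1) * g ⟨k - 1, hx0lt⟩ := by
      rw [Fintype.sum_eq_single (⟨k - 1, hx0lt⟩ : Fin (n + 1))]
      · rw [if_pos]
        show k = (k - 1) + 1
        omega
      · intro x hx
        rw [if_neg, zero_mul]
        intro hc
        apply hx
        apply Fin.ext
        show (x : ℕ) = k - 1
        omega
    rw [hL]
    -- right-hand side
    rw [← Finset.sum_filter]
    set S := Finset.univ.filter (fun j => b j = 1) with hS
    have hcS : S.card = k := by rw [hS, card_ones]; omega
    have hterm : ∀ j ∈ S,
        q ^ (∑ i ∈ Finset.univ.filter (fun i => j < i), (1 - 2 * ((b i : ℕ) : ℤ)))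
          * (q ^ invf n (Function.update b j 0) * g (wtFin n (Function.update b j 0)))
        = (fun r : ℕ => q ^ ((invf n b : ℤ) + (2 * (r : ℤ) - (k : ℤ) + 1)) * g ⟨k - 1, hx0lt⟩)
            ((S.filter (fun i => i < j)).card) := by
      intro j hj
      have hbj : b j = 1 := (Finset.mem_filter.mp hj).2
      simp only
      -- the image basis vector
      have hg : wtFin n (Function.update b j 0) = ⟨k - 1, hx0lt⟩ := by
        apply Fin.ext
        have hwu := wt_update b j 0
        have hbj1 : (b j : ℕ) = 1 := by rw [hbj]; rfl
        have hv : ((0 : Fin 2) : ℕ) = 0 := rfl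
        show (∑ i, ((Function.update b j 0 i : ℕ))) = k - 1
        omega
      rw [hg, ← mul_assoc]
      congr 1
      -- exponent bookkeeping
      have hoB : (Finset.univ.filter (fun i => i < j ∧ b i = 1)).card
          = (S.filter (fun i => i < j)).card := by
        rw [hS, Finset.filter_filter]
        congr 1
        apply Finset.filter_congr
        intro i _
        exact and_comm
      have hoA : (Finset.univ.filter (fun i => j < i ∧ b i = 1)).card
          = (S.filter (fun i => j < i)).card := by
        rw [hS, Finset.filter_filter]
        congr 1
        apply Finset.filter_congr
        intro i _
        exact and_comm
      have hinv := inv_update_zero b j hbj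
      have hcard := card_split S j hj
      have hE : (∑ i ∈ Finset.univ.filter (fun i => j < i), (1 - 2 * ((b i : ℕ) : ℤ)))
          = ((Finset.univ.filter (fun i => j < i ∧ b i = 0)).card : ℤ)
            - ((Finset.univ.filter (fun i => j < i ∧ b i = 1)).card : ℤ) := by
        have hsplit := Finset.sum_filter_add_sum_filter_not
          (Finset.univ.filter (fun i => j < i)) (fun i => b i = 1)
          (fun i => (1 - 2 * ((b i : ℕ) : ℤ)))
        have h1 : (∑ i ∈ (Finset.univ.filter (fun i => j < i)).filter (fun i => b i = 1),
            (1 - 2 * ((b i : ℕ) : ℤ)))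
            = -(((Finset.univ.filter (fun i => j < i ∧ b i = 1)).card : ℤ)) := by
          have hval : ∀ i ∈ (Finset.univ.filter (fun i => j < i)).filter (fun i => b i = 1),
              (1 - 2 * ((b i : ℕ) : ℤ)) = -1 := by
            intro i hi
            have hbi : b i = 1 := (Finset.mem_filter.mp hi).2
            rw [hbi]
            decide
          rw [Finset.sum_congr rfl hval, Finset.sum_const, Finset.filter_filter]
          simp
        have h2 : (∑ i ∈ (Finset.univ.filter (fun i => j < i)).filter (fun i => ¬ b i = 1),
            (1 - 2 * ((b i : ℕ) : ℤ)))
            = ((Finset.univ.filter (fun i => j < i ∧ b i = 0)).card : ℤ) := by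
          have hval : ∀ i ∈ (Finset.univ.filter (fun i => j < i)).filter (fun i => ¬ b i = 1),
              (1 - 2 * ((b i : ℕ) : ℤ)) = 1 := by
            intro i hi
            have hbi : ¬ b i = 1 := (Finset.mem_filter.mp hi).2
            have hb0 : b i = 0 := by
              rcases fin2_cases' (b i) with h | h
              · exact h
              · exact absurd h hbi
            rw [hb0]
            decide
          rw [Finset.sum_congr rfl hval, Finset.sum_const, Finset.filter_filter]
          have hpred : Finset.univ.filter (fun i => j < i ∧ ¬ b i = 1)
              = Finset.univ.filter (fun i => j < i ∧ b i = 0) := by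
            apply Finset.filter_congr
            intro i _
            rcases fin2_cases' (b i) with h | h <;> simp [h]
          rw [hpred]
          simp
        rw [h1, h2] at hsplit
        omega
      rw [← zpow_natCast q (invf n (Function.update b j 0)), ← zpadd, hE]
      congr 1
      omega
    rw [Finset.sum_congr rfl hterm, sum_rank S
      (fun r : ℕ => q ^ ((invf n b : ℤ) + (2 * (r : ℤ) - (k : ℤ) + 1)) * g ⟨k - 1, hx0lt⟩), hcS]
    have hsplit2 : ∀ r ∈ Finset.range k,
        q ^ ((invf n b : ℤ) + (2 * (r : ℤ) - (k : ℤ) + 1)) * g ⟨k - 1, hx0lt⟩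
        = q ^ ((invf n b : ℤ)) * q ^ (2 * (r : ℤ) - (k : ℤ) + 1) * g ⟨k - 1, hx0lt⟩ := by
      intro r _
      rw [zpadd]
    rw [Finset.sum_congr rfl hsplit2, ← Finset.sum_mul, ← Finset.mul_sum, ← qint_sum k,
      zpow_natCast]
    have : ((k - 1 : ℕ) : ℤ) + 1 = (k : ℤ) := by omega
    rw [this, mul_assoc]

lemma Fpart (n : ℕ) (g : Fin (n + 1) → K) (b : Fin n → Fin 2) :
    Imap n ((Fmat n).mulVec g) b = Fbig n (Imap n g) b := by
  classical
  simp only [Imap, Fbig, Matrix.mulVec, dotProduct, Fmat, Matrix.of_apply]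
  set k : ℕ := ((wtFin n b : ℕ)) with hk
  have hsum : (∑ i, ((b i : ℕ))) = k := hk.symm
  have hkn : k < n + 1 := by rw [hk]; exact (wtFin n b).isLt
  set m : ℕ := n - k with hm
  rcases Nat.eq_zero_or_pos m with hm0 | hmpos
  · -- weight n: both sides vanish
    have hkn' : k = n := by omega
    have hb1 : ∀ j, ¬ b j = 0 := by
      intro j h
      have hle : ∀ i ∈ Finset.univ.erase j, (b i : ℕ) ≤ 1 := by
        intro i _
        omega
      have h2 : (∑ i ∈ Finset.univ.erase j, (b i : ℕ))
          ≤ (Finset.univ.erase j).card * 1 := Finset.sum_le_card_nsmul _ _ 1 hle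
      have h3 : (b j : ℕ) + ∑ i ∈ Finset.univ.erase j, (b i : ℕ) = ∑ i, (b i : ℕ) :=
        Finset.add_sum_erase Finset.univ (fun i => (b i : ℕ)) (Finset.mem_univ j)
      have h4 : (Finset.univ.erase j).card = n - 1 := by
        rw [Finset.card_erase_of_mem (Finset.mem_univ j), Finset.card_univ, Fintype.card_fin]
      have h5 : (b j : ℕ) = 0 := by rw [h]; rfl
      have h6 : 0 < n := j.pos
      omega
    have hL : (∑ x : Fin (n + 1),
        (if k + 1 = (x : ℕ) then qint ((n : ℤ) - (x : ℕ) + 1) else 0) * g x) = 0 := by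
      apply Finset.sum_eq_zero
      intro x _
      have := x.isLt
      rw [if_neg (by omega), zero_mul]
    have hR : (∑ j : Fin n, if b j = 0 then
        q ^ (∑ i ∈ Finset.univ.filter (fun i => i < j), (2 * ((b i : ℕ) : ℤ) - 1))
          * (q ^ invf n (Function.update b j 1) * g (wtFin n (Function.update b j 1)))
        else 0) = 0 := by
      apply Finset.sum_eq_zero
      intro j _
      rw [if_neg (hb1 j)]
    rw [hL, hR, mul_zero]
  · -- weight less than n
    have hx0lt : k + 1 < n + 1 := by omega
    have hL : (∑ x : Fin (n + 1),
        (if k + 1 = (x : ℕ) then qint ((n : ℤ) - (x : ℕ) + 1) else 0) * g x)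
        = qint (m : ℤ) * g ⟨k + 1, hx0lt⟩ := by
      rw [Fintype.sum_eq_single (⟨k + 1, hx0lt⟩ : Fin (n + 1))]
      · rw [if_pos]
        · congr 2
          show (n : ℤ) - ((k + 1 : ℕ) : ℤ) + 1 = (m : ℤ)
          have : (m : ℤ) = (n : ℤ) - (k : ℤ) := by omega
          rw [this]
          push_cast
          ring
        · rfl
      · intro x hx
        rw [if_neg, zero_mul]
        intro hc
        apply hx
        apply Fin.ext
        show (x : ℕ) = k + 1
        omega
    rw [hL]
    rw [← Finset.sum_filter]
    set S := Finset.univ.filter (fun j => b j = 0) with hS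
    have hcS : S.card = m := by rw [hS, card_zeros]; omega
    have hterm : ∀ j ∈ S,
        q ^ (∑ i ∈ Finset.univ.filter (fun i => i < j), (2 * ((b i : ℕ) : ℤ) - 1))
          * (q ^ invf n (Function.update b j 1) * g (wtFin n (Function.update b j 1)))
        = (fun s : ℕ => q ^ ((invf n b : ℤ) + ((m : ℤ) - 1 - 2 * (s : ℤ))) * g ⟨k + 1, hx0lt⟩)
            ((S.filter (fun i => i < j)).card) := by
      intro j hj
      have hbj : b j = 0 := (Finset.mem_filter.mp hj).2
      simp only
      have hg : wtFin n (Function.update b j 1) = ⟨k + 1, hx0lt⟩ := by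
        apply Fin.ext
        have hwu := wt_update b j 1
        have hbj0 : (b j : ℕ) = 0 := by rw [hbj]; rfl
        have hv : ((1 : Fin 2) : ℕ) = 1 := rfl
        show (∑ i, ((Function.update b j 1 i : ℕ))) = k + 1
        omega
      rw [hg, ← mul_assoc]
      congr 1
      have hzB : (Finset.univ.filter (fun i => i < j ∧ b i = 0)).card
          = (S.filter (fun i => i < j)).card := by
        rw [hS, Finset.filter_filter]
        congr 1
        apply Finset.filter_congr
        intro i _
        exact and_comm
      have hzA : (Finset.univ.filter (fun i => j < i ∧ b i = 0)).card
          = (S.filter (fun i => j < i)).card := by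
        rw [hS, Finset.filter_filter]
        congr 1
        apply Finset.filter_congr
        intro i _
        exact and_comm
      have hinv := inv_update_one b j hbj
      have hcard := card_split S j hj
      have hE : (∑ i ∈ Finset.univ.filter (fun i => i < j), (2 * ((b i : ℕ) : ℤ) - 1))
          = ((Finset.univ.filter (fun i => i < j ∧ b i = 1)).card : ℤ)
            - ((Finset.univ.filter (fun i => i < j ∧ b i = 0)).card : ℤ) := by
        have hsplit := Finset.sum_filter_add_sum_filter_not
          (Finset.univ.filter (fun i => i < j)) (fun i => b i = 1)
          (fun i => (2 * ((b i : ℕ) : ℤ) - 1))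
        have h1 : (∑ i ∈ (Finset.univ.filter (fun i => i < j)).filter (fun i => b i = 1),
            (2 * ((b i : ℕ) : ℤ) - 1))
            = ((Finset.univ.filter (fun i => i < j ∧ b i = 1)).card : ℤ) := by
          have hval : ∀ i ∈ (Finset.univ.filter (fun i => i < j)).filter (fun i => b i = 1),
              (2 * ((b i : ℕ) : ℤ) - 1) = 1 := by
            intro i hi
            have hbi : b i = 1 := (Finset.mem_filter.mp hi).2
            rw [hbi]
            decide
          rw [Finset.sum_congr rfl hval, Finset.sum_const, Finset.filter_filter]
          simp
        have h2 : (∑ i ∈ (Finset.univ.filter (fun i => i < j)).filter (fun i => ¬ b i = 1),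
            (2 * ((b i : ℕ) : ℤ) - 1))
            = -(((Finset.univ.filter (fun i => i < j ∧ b i = 0)).card : ℤ)) := by
          have hval : ∀ i ∈ (Finset.univ.filter (fun i => i < j)).filter (fun i => ¬ b i = 1),
              (2 * ((b i : ℕ) : ℤ) - 1) = -1 := by
            intro i hi
            have hbi : ¬ b i = 1 := (Finset.mem_filter.mp hi).2
            have hb0 : b i = 0 := by
              rcases fin2_cases' (b i) with h | h
              · exact h
              · exact absurd h hbi
            rw [hb0]
            decide
          rw [Finset.sum_congr rfl hval, Finset.sum_const, Finset.filter_filter]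
          have hpred : Finset.univ.filter (fun i => i < j ∧ ¬ b i = 1)
              = Finset.univ.filter (fun i => i < j ∧ b i = 0) := by
            apply Finset.filter_congr
            intro i _
            rcases fin2_cases' (b i) with h | h <;> simp [h]
          rw [hpred]
          simp
        rw [h1, h2] at hsplit
        omega
      rw [← zpow_natCast q (invf n (Function.update b j 1)), ← zpadd, hE]
      congr 1
      omega
    rw [Finset.sum_congr rfl hterm, sum_rank S
      (fun s : ℕ => q ^ ((invf n b : ℤ) + ((m : ℤ) - 1 - 2 * (s : ℤ))) * g ⟨k + 1, hx0lt⟩), hcS]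
    have hsplit2 : ∀ s ∈ Finset.range m,
        q ^ ((invf n b : ℤ) + ((m : ℤ) - 1 - 2 * (s : ℤ))) * g ⟨k + 1, hx0lt⟩
        = q ^ ((invf n b : ℤ)) * q ^ ((m : ℤ) - 1 - 2 * (s : ℤ)) * g ⟨k + 1, hx0lt⟩ := by
      intro s _
      rw [zpadd]
    rw [Finset.sum_congr rfl hsplit2, ← Finset.sum_mul, ← Finset.mul_sum, ← qint_sum' m,
      zpow_natCast, mul_assoc]

/-- The map `i_n : V_n → V_1^{⊗n}`, `v_k ↦ Σ_{|a|=k} q^{inv(a)} v_a`, is a homomorphism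
of `U_q(sl₂)`-modules, where `V_1^{⊗n}` carries the action via the iterated
comultiplication. -/
theorem inclusion_is_module_map (n : ℕ) :
    ∀ g : Fin (n + 1) → K,
      Imap n ((Emat n).mulVec g) = Ebig n (Imap n g) ∧
      Imap n ((Fmat n).mulVec g) = Fbig n (Imap n g) ∧
      Imap n ((Kmat n).mulVec g) = Kbig n (Imap n g) := by
  intro g
  exact ⟨funext (Epart n g), funext (Fpart n g), funext (Kpart n g)⟩
end
end
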